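/- arXiv:2003.09110 — 3 statements merged into one kernel-verified Lean document; each statement's English description precedes it below -/
import Mathlib

section
/- Let T be a label-regular tree with a normal labelling, G = Aut(T), v a fixed vertex, and K = Stab_G(v). Then G is the disjoint union over all finite label sequences α, compatible with T and beginning and ending with λ(v), of the double cosets K g_α K, where g_α is any automorphism with the label sequence of the path from v to g_α(v) equal to α. -/
open SimpleGraph Walk

namespace Stmt3Aux

variable {V C : Type*} {T : SimpleGraph V}

noncomputable local instance : DecidableEq V := Classical.decEq V

lemma support_getElem (p : T.Walk u w) : ∀ (i : ℕ) (h : i < p.support.length),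
    p.support[i] = p.getVert i := by
  induction p with
  | nil =>
    intro i h
    simp only [Walk.support_nil, List.length_singleton] at h
    interval_cases i
    simp
  | cons ha q ih =>
    intro i h
    cases i with
    | zero => simp
    | succ i =>
      simp only [Walk.support_cons, List.getElem_cons_succ, Walk.getVert_cons_succ]
      exact ih i (by simpa [Walk.length_support] using h)

noncomputable def tpath (hT : T.IsTree) (v z : V) : T.Walk v z :=
  (hT.existsUnique_path v z).choose

lemma tpath_isPath (hT : T.IsTree) (v z : V) : (tpath hT v z).IsPath :=
  (hT.existsUnique_path v z).choose_spec.1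

lemma tpath_unique (hT : T.IsTree) {v z : V} (q : T.Walk v z) (hq : q.IsPath) :
    q = tpath hT v z :=
  (hT.existsUnique_path v z).choose_spec.2 q hq

noncomputable def tdist (hT : T.IsTree) (v z : V) : ℕ := (tpath hT v z).length

lemma tdist_self (hT : T.IsTree) (v : V) : tdist hT v v = 0 := by
  have := tpath_unique hT (Walk.nil : T.Walk v v) (IsPath.nil)
  simp [tdist, ← this]

lemma eq_of_tdist_eq_zero (hT : T.IsTree) {v z : V} (h : tdist hT v z = 0) : z = v :=
  (Walk.eq_of_length_eq_zero h).symm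

/-- In a tree, distances of adjacent vertices from `v` differ by exactly one. -/
lemma adj_tdist (hT : T.IsTree) {v p c : V} (h : T.Adj p c) :
    tdist hT v c = tdist hT v p + 1 ∨ tdist hT v p = tdist hT v c + 1 := by
  classical
  set q := tpath hT v c with hq
  by_cases hm : p ∈ q.support
  · left
    have ht := (tpath_isPath hT v c).takeUntil hm
    have hd := (tpath_isPath hT v c).dropUntil hm
    have hedge : (Walk.cons h Walk.nil : T.Walk p c).IsPath := by
      simp [h.ne]
    have hdr : q.dropUntil p hm = Walk.cons h Walk.nil := by
      rw [tpath_unique hT _ hd, tpath_unique hT _ hedge]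
    have htq : q.takeUntil p hm = tpath hT v p := tpath_unique hT _ ht
    have hlen := congrArg Walk.length (q.take_spec hm)
    rw [Walk.length_append, hdr, htq] at hlen
    simp only [Walk.length_cons, Walk.length_nil] at hlen
    simp [tdist, ← hq, ← hlen]
  · right
    have hcp : (q.concat h.symm).IsPath := by
      rw [Walk.isPath_def, Walk.support_concat]
      rw [← List.concat_eq_append]
      exact List.Nodup.concat hm (tpath_isPath hT v c).support_nodup
    have := tpath_unique hT _ hcp
    have hlen := congrArg Walk.length this
    rw [Walk.length_concat] at hlen
    simp [tdist, ← hq, ← hlen]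

/-- In a tree, the parent (neighbour closer to the root) is unique. -/
lemma parent_unique (hT : T.IsTree) {v z p p' : V} (h : T.Adj p z) (h' : T.Adj p' z)
    (hd : tdist hT v z = tdist hT v p + 1) (hd' : tdist hT v z = tdist hT v p' + 1) :
    p = p' := by
  classical
  have key : ∀ (a : V) (ha : T.Adj a z), tdist hT v z = tdist hT v a + 1 →
      ∃ hm : z ∉ (tpath hT v a).support, (tpath hT v a).concat ha = tpath hT v z := by
    intro a ha hda
    have hm : z ∉ (tpath hT v a).support := by
      intro hmem
      have ht := (tpath_isPath hT v a).takeUntil hmem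
      have := tpath_unique hT _ ht
      have hlen := congrArg Walk.length this
      have hle := Walk.length_takeUntil_le (tpath hT v a) hmem
      rw [← hlen] at *
      have : tdist hT v z ≤ tdist hT v a := by
        simpa [tdist, ← this] using hle
      omega
    refine ⟨hm, tpath_unique hT _ ?_⟩
    rw [Walk.isPath_def, Walk.support_concat]
    rw [← List.concat_eq_append]
    exact List.Nodup.concat hm (tpath_isPath hT v a).support_nodup
  obtain ⟨hm, he⟩ := key p h hd
  obtain ⟨hm', he'⟩ := key p' h' hd'
  have := he.trans he'.symm
  obtain ⟨hv, -⟩ := Walk.concat_inj this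
  exact hv


/-- Along the (unique, hence geodesic) path from `v`, the `i`-th vertex is at distance
`min i length` from `v`. -/
lemma getVert_tdist (hT : T.IsTree) {v z : V} (q : T.Walk v z) (hq : q.IsPath) (i : ℕ) :
    tdist hT v (q.getVert i) = min i q.length := by
  classical
  induction i using Nat.strong_induction_on with
  | _ i ih =>
    match i with
    | 0 => simp [tdist_self hT v]
    | (i+1) =>
      by_cases hlen : q.length ≤ i
      · have h1 : q.getVert (i+1) = z := q.getVert_of_length_le (by omega)
        have h2 : min (i+1) q.length = q.length := by omega
        rw [h1, h2, tdist]
        rw [tpath_unique hT q hq]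
      · push_neg at hlen
        have hadj : T.Adj (q.getVert i) (q.getVert (i+1)) := q.adj_getVert_succ hlen
        have hdi : tdist hT v (q.getVert i) = i := by
          rw [ih i (by omega)]; omega
        rcases adj_tdist hT (v := v) hadj with hgood | hbad
        · rw [hgood, hdi]; omega
        · exfalso
          rw [hdi] at hbad
          have hi1 : 1 ≤ i := by
            rcases Nat.eq_zero_or_pos i with h0 | h1
            · omega
            · omega
          have hdi1 : tdist hT v (q.getVert (i+1)) = i - 1 := by omega
          have hadj' : T.Adj (q.getVert (i-1)) (q.getVert i) := by
            have := q.adj_getVert_succ (i := i-1) (by omega)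
            rwa [show i - 1 + 1 = i by omega] at this
          have hdim : tdist hT v (q.getVert (i-1)) = i - 1 := by
            rw [ih (i-1) (by omega)]; omega
          have heq : q.getVert (i+1) = q.getVert (i-1) := by
            refine parent_unique hT (v := v) hadj.symm hadj' ?_ ?_ <;> omega
          have hb1 : i + 1 < q.support.length := by rw [Walk.length_support]; omega
          have hb2 : i - 1 < q.support.length := by rw [Walk.length_support]; omega
          have : q.support[i+1] = q.support[i-1] := by
            rw [support_getElem _ _ hb1, support_getElem _ _ hb2, heq]
          have hcontra : i + 1 = i - 1 := (hq.support_nodup.getElem_inj_iff).1 this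
          omega

/-- The parent of `z` in the tree rooted at `v`. -/
noncomputable def tpar (hT : T.IsTree) (v z : V) : V :=
  (tpath hT v z).getVert (tdist hT v z - 1)

lemma tpar_adj (hT : T.IsTree) {v z : V} (hz : z ≠ v) : T.Adj (tpar hT v z) z := by
  have hpos : 0 < tdist hT v z := by
    rcases Nat.eq_zero_or_pos (tdist hT v z) with h0 | h1
    · exact absurd (eq_of_tdist_eq_zero hT h0) hz
    · exact h1
  have := (tpath hT v z).adj_getVert_succ (i := tdist hT v z - 1) (by
    simp only [tdist] at hpos ⊢; omega)
  rw [show tdist hT v z - 1 + 1 = tdist hT v z by omega] at this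
  rw [tdist] at this
  rw [(tpath hT v z).getVert_length] at this
  exact this

lemma tpar_tdist (hT : T.IsTree) {v z : V} (hz : z ≠ v) :
    tdist hT v (tpar hT v z) = tdist hT v z - 1 := by
  have hpos : 0 < tdist hT v z := by
    rcases Nat.eq_zero_or_pos (tdist hT v z) with h0 | h1
    · exact absurd (eq_of_tdist_eq_zero hT h0) hz
    · exact h1
  rw [tpar, getVert_tdist hT _ (tpath_isPath hT v z)]
  have : tdist hT v z = (tpath hT v z).length := rfl
  omega

/-- Characterisation of the parent. -/
lemma tpar_eq (hT : T.IsTree) {v z p : V} (h : T.Adj p z)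
    (hd : tdist hT v z = tdist hT v p + 1) : tpar hT v z = p := by
  have hz : z ≠ v := by
    intro hzv; rw [hzv, tdist_self] at hd; omega
  exact parent_unique hT (tpar_adj hT hz) h (by rw [tpar_tdist hT hz]; omega) hd


section Pins

variable (lab : V → C)

lemma swap_adj_lab {q u w : V} (hu : T.Adj q u) (hw : T.Adj q w) (hl : lab u = lab w)
    (c : V) (hc : T.Adj q c) :
    T.Adj q (Equiv.swap u w c) ∧ lab (Equiv.swap u w c) = lab c := by
  rcases eq_or_ne c u with rfl | hcu
  · rw [Equiv.swap_apply_left]; exact ⟨hw, hl.symm⟩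
  · rcases eq_or_ne c w with rfl | hcw
    · rw [Equiv.swap_apply_right]; exact ⟨hu, hl⟩
    · rw [Equiv.swap_apply_of_ne_of_ne hcu hcw]; exact ⟨hc, rfl⟩

/-- A label-preserving bijection of neighbourhoods with one prescribed value. -/
lemma pin1 (hnormal : ∀ u w : V, lab u = lab w →
      ∃ φ : T ≃g T, (∀ z, lab (φ z) = lab z) ∧ φ u = w)
    {p q a a' : V} (hpq : lab p = lab q) (ha : T.Adj p a) (ha' : T.Adj q a')
    (hl : lab a = lab a') :
    ∃ e : V ≃ V,
      (∀ c, T.Adj p c → T.Adj q (e c) ∧ lab (e c) = lab c) ∧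
      (∀ c, T.Adj q c → T.Adj p (e.symm c)) ∧ e a = a' := by
  obtain ⟨φ, hφlab, hφp⟩ := hnormal p q hpq
  have hφadj : ∀ c, T.Adj p c → T.Adj q (φ c) := by
    intro c hc
    have := φ.map_adj_iff.2 hc
    rwa [hφp] at this
  have hφa : T.Adj q (φ a) := hφadj a ha
  refine ⟨φ.toEquiv.trans (Equiv.swap (φ a) a'), ?_, ?_, ?_⟩
  · intro c hc
    have h1 := hφadj c hc
    have h2 := swap_adj_lab lab hφa ha' (by rw [hφlab a, hl]) (φ c) h1
    simpa [hφlab c] using h2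
  · intro c hc
    have h1 := (swap_adj_lab lab hφa ha' (by rw [hφlab a, hl]) c hc).1
    have heq : (φ.toEquiv.trans (Equiv.swap (φ a) a')).symm c
        = φ.toEquiv.symm (Equiv.swap (φ a) a' c) := by
      simp [Equiv.symm_swap]
    rw [heq]
    have h2 : T.Adj (φ.symm q) (φ.symm (Equiv.swap (φ a) a' c)) := φ.symm.map_adj_iff.2 h1
    have h3 : φ.symm q = p := by rw [← hφp]; exact φ.symm_apply_apply p
    rwa [h3] at h2
  · simp [Equiv.swap_apply_left]

/-- A label-preserving bijection of neighbourhoods with two prescribed values. -/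
lemma pin2 (hnormal : ∀ u w : V, lab u = lab w →
      ∃ φ : T ≃g T, (∀ z, lab (φ z) = lab z) ∧ φ u = w)
    {p q a a' b b' : V} (hpq : lab p = lab q) (ha : T.Adj p a) (ha' : T.Adj q a')
    (hla : lab a = lab a') (hb : T.Adj p b) (hb' : T.Adj q b') (hlb : lab b = lab b')
    (hab : a ≠ b) (hab' : a' ≠ b') :
    ∃ e : V ≃ V,
      (∀ c, T.Adj p c → T.Adj q (e c) ∧ lab (e c) = lab c) ∧
      (∀ c, T.Adj q c → T.Adj p (e.symm c)) ∧ e a = a' ∧ e b = b' := by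
  obtain ⟨e₁, he₁, he₁s, he₁a⟩ := pin1 lab hnormal hpq ha ha' hla
  have he₁b : T.Adj q (e₁ b) ∧ lab (e₁ b) = lab b := he₁ b hb
  have hlabb : lab (e₁ b) = lab b' := by rw [he₁b.2, hlb]
  refine ⟨e₁.trans (Equiv.swap (e₁ b) b'), ?_, ?_, ?_, ?_⟩
  · intro c hc
    have h1 := he₁ c hc
    have h2 := swap_adj_lab lab he₁b.1 hb' hlabb (e₁ c) h1.1
    simp only [Equiv.trans_apply]
    exact ⟨h2.1, by rw [h2.2, h1.2]⟩
  · intro c hc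
    have h1 := (swap_adj_lab lab he₁b.1 hb' hlabb c hc).1
    have heq : (e₁.trans (Equiv.swap (e₁ b) b')).symm c
        = e₁.symm (Equiv.swap (e₁ b) b' c) := by
      simp [Equiv.symm_swap]
    rw [heq]
    exact he₁s _ h1
  · simp only [Equiv.trans_apply, he₁a]
    have h1 : a' ≠ e₁ b := by
      rw [← he₁a]; exact fun h => hab (e₁.injective h)
    exact Equiv.swap_apply_of_ne_of_ne h1 hab'
  · simp [Equiv.swap_apply_left]

end Pins

/-- A partial label-preserving isomorphism defined on the ball of radius `n` around `v`,
together with a partial inverse, respecting the rooted tree structure and pinned along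
the distinguished paths `px`, `py`. -/
structure Ext (T : SimpleGraph V) (lab : V → C) (v : V) (d : V → ℕ) (pp : V → V)
    (px py : ℕ → V) (n : ℕ) where
  f : V → V
  g : V → V
  hfv : f v = v
  hgv : g v = v
  hlab : ∀ z, d z ≤ n → lab (f z) = lab z
  hd : ∀ z, d z ≤ n → d (f z) = d z
  hadj : ∀ z, d z ≤ n → z ≠ v → T.Adj (f (pp z)) (f z)
  hgd : ∀ z, d z ≤ n → d (g z) = d z
  hgadj : ∀ z, d z ≤ n → z ≠ v → T.Adj (g (pp z)) (g z)
  hgf : ∀ z, d z ≤ n → g (f z) = z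
  hfg : ∀ z, d z ≤ n → f (g z) = z
  hpin : ∀ i, i ≤ n → f (px i) = py i

lemma step {T : SimpleGraph V} (lab : V → C)
    (hnormal : ∀ u w : V, lab u = lab w →
      ∃ φ : T ≃g T, (∀ z, lab (φ z) = lab z) ∧ φ u = w)
    (v x y : V) (d : V → ℕ) (pp : V → V) (px py : ℕ → V)
    (hdv : d v = 0)
    (hzv : ∀ z : V, d z = 0 → z = v)
    (hl1 : 1 ≤ d x)
    (hpxd : ∀ i, d (px i) = min i (d x))
    (hpyd : ∀ i, d (py i) = min i (d x))
    (hpxadj : ∀ i, i < d x → T.Adj (px i) (px (i+1)))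
    (hpyadj : ∀ i, i < d x → T.Adj (py i) (py (i+1)))
    (hpx0 : px 0 = v) (hpy0 : py 0 = v)
    (hpxtop : ∀ i, d x ≤ i → px i = x)
    (hpytop : ∀ i, d x ≤ i → py i = y)
    (hpard : ∀ z : V, z ≠ v → d (pp z) = d z - 1)
    (hparadj : ∀ z : V, z ≠ v → T.Adj (pp z) z)
    (hadj_d : ∀ {p c : V}, T.Adj p c → d c = d p + 1 ∨ d p = d c + 1)
    (hpar_u : ∀ {z p p' : V}, T.Adj p z → T.Adj p' z → d z = d p + 1 → d z = d p' + 1 → p = p')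
    (hpar_eq : ∀ {z p : V}, T.Adj p z → d z = d p + 1 → pp z = p)
    (hlabxy : ∀ i, lab (px i) = lab (py i))
    (n : ℕ) (E : Ext T lab v d pp px py n) :
    ∃ E' : Ext T lab v d pp px py (n+1),
      (∀ z, d z ≤ n → E'.f z = E.f z) ∧
      (∀ z, d z ≤ n → E'.g z = E.g z) := by
  classical
  have hznv : ∀ z : V, d z ≠ 0 → z ≠ v := by
    intro z h hzv'; rw [hzv', hdv] at h; exact h rfl
  -- existence of good local bijections at each vertex of distance n
  have good_ex : ∀ p : V, d p = n → ∃ e : V ≃ V,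
      (∀ c, T.Adj p c → T.Adj (E.f p) (e c) ∧ lab (e c) = lab c) ∧
      (∀ c, T.Adj (E.f p) c → T.Adj p (e.symm c)) ∧
      (p ≠ v → e (pp p) = E.f (pp p)) ∧
      (p = px n → n + 1 ≤ d x → e (px (n+1)) = py (n+1)) := by
    intro p hp
    have hlabp : lab (E.f p) = lab p := E.hlab p (le_of_eq hp)
    by_cases hpv : p = v
    · have hn0 : n = 0 := by rw [hpv, hdv] at hp; omega
      subst hn0
      have hfv : E.f p = v := by rw [hpv]; exact E.hfv
      have hax : T.Adj p (px 1) := by rw [hpv]; exact hpx0 ▸ hpxadj 0 hl1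
      have hay : T.Adj v (py 1) := hpy0 ▸ hpyadj 0 hl1
      obtain ⟨e, he1, he2, he3⟩ := pin1 lab hnormal (q := v)
        (show lab p = lab v by rw [hpv]) hax hay (hlabxy 1)
      refine ⟨e, ?_, ?_, fun h => absurd hpv h, fun _ _ => he3⟩
      · rw [hfv]; exact he1
      · rw [hfv]; exact he2
    · have hn1 : 1 ≤ n := by
        rcases Nat.eq_zero_or_pos n with h0 | h1
        · exact absurd (hzv p (by omega)) hpv
        · exact h1
      have hppadj : T.Adj (pp p) p := hparadj p hpv
      have hppd : d (pp p) = n - 1 := by rw [hpard p hpv, hp]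
      have ha' : T.Adj (E.f (pp p)) (E.f p) := E.hadj p (le_of_eq hp) hpv
      have hla : lab (pp p) = lab (E.f (pp p)) := (E.hlab _ (by omega)).symm
      by_cases hpath : p = px n ∧ n + 1 ≤ d x
      · obtain ⟨hpeq, hnl⟩ := hpath
        have hbadj : T.Adj p (px (n+1)) := hpeq ▸ hpxadj n (by omega)
        have hfp : E.f p = py n := by rw [hpeq]; exact E.hpin n le_rfl
        have hb'adj : T.Adj (E.f p) (py (n+1)) := by rw [hfp]; exact hpyadj n (by omega)
        have hab : pp p ≠ px (n+1) := by
          intro h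
          have := congrArg d h
          rw [hppd, hpxd (n+1)] at this
          omega
        have hab' : E.f (pp p) ≠ py (n+1) := by
          intro h
          have := congrArg d h
          rw [E.hd _ (by omega), hppd, hpyd (n+1)] at this
          omega
        obtain ⟨e, he1, he2, he3, he4⟩ := pin2 lab hnormal hlabp.symm hppadj.symm ha'.symm
          hla hbadj hb'adj (hlabxy (n+1)) hab hab'
        exact ⟨e, he1, he2, fun _ => he3, fun _ _ => he4⟩
      · obtain ⟨e, he1, he2, he3⟩ := pin1 lab hnormal hlabp.symm hppadj.symm ha'.symm hla
        exact ⟨e, he1, he2, fun _ => he3, fun h1 h2 => absurd ⟨h1, h2⟩ hpath⟩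
  choose σ hσ using good_ex
  have hppn : ∀ z : V, d z = n + 1 → d (pp z) = n := by
    intro z hz
    rw [hpard z (hznv z (by omega)), hz]
    omega
  have hgppn : ∀ w : V, d w = n + 1 → d (E.g (pp w)) = n := by
    intro w hw
    rw [E.hgd _ (le_of_eq (hppn w hw)), hppn w hw]
  set f' : V → V := fun z =>
    if h : d z ≤ n then E.f z
    else if h2 : d z = n + 1 then σ (pp z) (hppn z h2) z else z with hf'def
  set g' : V → V := fun w =>
    if h : d w ≤ n then E.g w
    else if h2 : d w = n + 1 then (σ (E.g (pp w)) (hgppn w h2)).symm w else w with hg'def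
  have hf'low : ∀ z, d z ≤ n → f' z = E.f z := fun z h => dif_pos h
  have hg'low : ∀ w, d w ≤ n → g' w = E.g w := fun w h => dif_pos h
  have hf'high : ∀ z (h2 : d z = n + 1), f' z = σ (pp z) (hppn z h2) z := by
    intro z h2
    have hnot : ¬ d z ≤ n := by omega
    show (if h : d z ≤ n then E.f z
      else if h2 : d z = n + 1 then σ (pp z) (hppn z h2) z else z) = _
    rw [dif_neg hnot, dif_pos h2]
  have hg'high : ∀ w (h2 : d w = n + 1), g' w = (σ (E.g (pp w)) (hgppn w h2)).symm w := by
    intro w h2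
    have hnot : ¬ d w ≤ n := by omega
    show (if h : d w ≤ n then E.g w
      else if h2 : d w = n + 1 then (σ (E.g (pp w)) (hgppn w h2)).symm w else w) = _
    rw [dif_neg hnot, dif_pos h2]
  -- properties at the new level
  have hAdjHigh : ∀ z (hz : d z = n + 1),
      T.Adj (E.f (pp z)) (f' z) ∧ lab (f' z) = lab z := by
    intro z hz
    rw [hf'high z hz]
    exact (hσ (pp z) (hppn z hz)).1 z (hparadj z (hznv z (by omega)))
  have hdHigh : ∀ z (hz : d z = n + 1), d (f' z) = n + 1 := by
    intro z hz
    have h1 := (hAdjHigh z hz).1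
    have hdfp : d (E.f (pp z)) = n := by
      rw [E.hd _ (le_of_eq (hppn z hz)), hppn z hz]
    rcases hadj_d h1 with h | h
    · omega
    · exfalso
      have hn1 : 1 ≤ n := by omega
      have hppv : pp z ≠ v := hznv _ (by rw [hppn z hz]; omega)
      have h5 : T.Adj (E.f (pp (pp z))) (E.f (pp z)) := E.hadj (pp z) (le_of_eq (hppn z hz)) hppv
      have h6 : d (E.f (pp (pp z))) = n - 1 := by
        rw [E.hd _ (by rw [hpard _ hppv, hppn z hz]; omega), hpard _ hppv, hppn z hz]
      have heq : f' z = E.f (pp (pp z)) := by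
        refine hpar_u h1.symm h5 ?_ ?_ <;> omega
      have hclause3 := (hσ (pp z) (hppn z hz)).2.2.1 hppv
      rw [hf'high z hz] at heq
      rw [← hclause3] at heq
      have h8 : z = pp (pp z) := (σ (pp z) (hppn z hz)).injective heq
      have h9 := congrArg d h8
      rw [hz, hpard _ hppv, hppn z hz] at h9
      omega
  have hGHigh : ∀ w (hw : d w = n + 1),
      T.Adj (E.g (pp w)) (g' w) ∧ d (g' w) = n + 1 ∧ f' (g' w) = w := by
    intro w hw
    have hwnv : w ≠ v := hznv w (by omega)
    have hgp : d (E.g (pp w)) = n := hgppn w hw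
    have hfP : E.f (E.g (pp w)) = pp w := E.hfg _ (le_of_eq (hppn w hw))
    have hwadj : T.Adj (E.f (E.g (pp w))) w := by rw [hfP]; exact hparadj w hwnv
    have ha := (hσ (E.g (pp w)) (hgppn w hw)).2.1 w hwadj
    rw [← hg'high w hw] at ha
    have hdgw : d (g' w) = n + 1 := by
      rcases hadj_d ha with h | h
      · rw [hgppn w hw] at h; omega
      · exfalso
        rw [hgppn w hw] at h
        have hn1 : 1 ≤ n := by omega
        have hP0v : E.g (pp w) ≠ v := hznv _ (by rw [hgppn w hw]; omega)
        have hclause3 := (hσ (E.g (pp w)) (hgppn w hw)).2.2.1 hP0v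
        have heq : g' w = pp (E.g (pp w)) := by
          refine hpar_u ha.symm (hparadj _ hP0v) ?_ ?_
          · omega
          · rw [hpard _ hP0v, hgppn w hw]; omega
        have hw2 : w = E.f (pp (E.g (pp w))) := by
          rw [← hclause3, ← heq, hg'high w hw]
          exact ((σ (E.g (pp w)) (hgppn w hw)).apply_symm_apply w).symm
        have h9 := congrArg d hw2
        rw [hw, E.hd _ (by rw [hpard _ hP0v, hgppn w hw]; omega),
          hpard _ hP0v, hgppn w hw] at h9
        omega
    refine ⟨ha, hdgw, ?_⟩
    have hppgw : pp (g' w) = E.g (pp w) :=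
      hpar_eq ha (by rw [hdgw, hgppn w hw])
    rw [hf'high _ hdgw]
    have : σ (pp (g' w)) (hppn (g' w) hdgw) = σ (E.g (pp w)) (hgppn w hw) := by
      congr 1
    rw [this, hg'high w hw]
    exact (σ (E.g (pp w)) (hgppn w hw)).apply_symm_apply w
  have hgfHigh : ∀ z (hz : d z = n + 1), g' (f' z) = z := by
    intro z hz
    have hdfz := hdHigh z hz
    have h1 := (hAdjHigh z hz).1
    have hppfz : pp (f' z) = E.f (pp z) := by
      refine hpar_eq h1 ?_
      rw [hdfz, E.hd _ (le_of_eq (hppn z hz)), hppn z hz]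
    rw [hg'high _ hdfz]
    have hgE : E.g (pp (f' z)) = pp z := by
      rw [hppfz]
      exact E.hgf _ (le_of_eq (hppn z hz))
    have hσeq : σ (E.g (pp (f' z))) (hgppn (f' z) hdfz) = σ (pp z) (hppn z hz) := by
      congr 1
    rw [hσeq, hf'high z hz]
    exact (σ (pp z) (hppn z hz)).symm_apply_apply z
  -- assemble the new partial isomorphism
  refine ⟨⟨f', g', ?_, ?_, ?_, ?_, ?_, ?_, ?_, ?_, ?_, ?_⟩, hf'low, hg'low⟩
  · rw [hf'low v (by omega)]; exact E.hfv
  · rw [hg'low v (by omega)]; exact E.hgv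
  · -- hlab
    intro z hzle
    rcases Nat.lt_or_ge (d z) (n+1) with h | h
    · rw [hf'low z (by omega)]; exact E.hlab z (by omega)
    · exact (hAdjHigh z (by omega)).2
  · -- hd
    intro z hzle
    rcases Nat.lt_or_ge (d z) (n+1) with h | h
    · rw [hf'low z (by omega)]; exact E.hd z (by omega)
    · have hz : d z = n + 1 := by omega
      rw [hdHigh z hz, hz]
  · -- hadj
    intro z hzle hzv'
    rcases Nat.lt_or_ge (d z) (n+1) with h | h
    · rw [hf'low z (by omega), hf'low (pp z) (by rw [hpard z hzv']; omega)]
      exact E.hadj z (by omega) hzv'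
    · have hz : d z = n + 1 := by omega
      rw [hf'low (pp z) (le_of_eq (hppn z hz))]
      exact (hAdjHigh z hz).1
  · -- hgd
    intro w hwle
    rcases Nat.lt_or_ge (d w) (n+1) with h | h
    · rw [hg'low w (by omega)]; exact E.hgd w (by omega)
    · have hw : d w = n + 1 := by omega
      rw [(hGHigh w hw).2.1, hw]
  · -- hgadj
    intro w hwle hwv'
    rcases Nat.lt_or_ge (d w) (n+1) with h | h
    · rw [hg'low w (by omega), hg'low (pp w) (by rw [hpard w hwv']; omega)]
      exact E.hgadj w (by omega) hwv'
    · have hw : d w = n + 1 := by omega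
      rw [hg'low (pp w) (le_of_eq (hppn w hw))]
      exact (hGHigh w hw).1
  · -- hgf
    intro z hzle
    rcases Nat.lt_or_ge (d z) (n+1) with h | h
    · rw [hf'low z (by omega), hg'low (E.f z) (by rw [E.hd z (by omega)]; omega)]
      exact E.hgf z (by omega)
    · exact hgfHigh z (by omega)
  · -- hfg
    intro w hwle
    rcases Nat.lt_or_ge (d w) (n+1) with h | h
    · rw [hg'low w (by omega), hf'low (E.g w) (by rw [E.hgd w (by omega)]; omega)]
      exact E.hfg w (by omega)
    · exact (hGHigh w (by omega)).2.2
  · -- hpin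
    intro i hi
    rcases Nat.lt_or_ge i (n+1) with h | h
    · rw [hf'low (px i) (by rw [hpxd i]; omega)]
      exact E.hpin i (by omega)
    · have hieq : i = n + 1 := by omega
      subst hieq
      rcases Nat.lt_or_ge n (d x) with hlt | hge
      · -- n + 1 ≤ d x
        have hdpx : d (px (n+1)) = n + 1 := by rw [hpxd]; omega
        rw [hf'high _ hdpx]
        have hpppx : pp (px (n+1)) = px n := by
          refine hpar_eq (hpxadj n (by omega)) ?_
          rw [hdpx, hpxd n]; omega
        have hσeq : σ (pp (px (n+1))) (hppn _ hdpx)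
            = σ (px n) (by rw [hpxd n]; omega) := by congr 1
        rw [hσeq]
        exact (hσ (px n) (by rw [hpxd n]; omega)).2.2.2 rfl (by omega)
      · -- d x ≤ n
        have h1 : px (n+1) = x := hpxtop _ (by omega)
        have h2 : px (d x) = x := hpxtop _ le_rfl
        have h3 : py (n+1) = y := hpytop _ (by omega)
        have h4 : py (d x) = y := hpytop _ le_rfl
        rw [h1, ← h2, hf'low _ (by rw [hpxd]; omega), E.hpin (d x) (by omega), h4, h3]

/-- Building a label-preserving automorphism fixing `v` and carrying `x` to `y`,
from the abstract rooted-tree data. -/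
lemma buildIso {T : SimpleGraph V} (lab : V → C)
    (hnormal : ∀ u w : V, lab u = lab w →
      ∃ φ : T ≃g T, (∀ z, lab (φ z) = lab z) ∧ φ u = w)
    (v x y : V) (d : V → ℕ) (pp : V → V) (px py : ℕ → V)
    (hdv : d v = 0)
    (hzv : ∀ z : V, d z = 0 → z = v)
    (hl1 : 1 ≤ d x)
    (hpxd : ∀ i, d (px i) = min i (d x))
    (hpyd : ∀ i, d (py i) = min i (d x))
    (hpxadj : ∀ i, i < d x → T.Adj (px i) (px (i+1)))
    (hpyadj : ∀ i, i < d x → T.Adj (py i) (py (i+1)))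
    (hpx0 : px 0 = v) (hpy0 : py 0 = v)
    (hpxtop : ∀ i, d x ≤ i → px i = x)
    (hpytop : ∀ i, d x ≤ i → py i = y)
    (hpard : ∀ z : V, z ≠ v → d (pp z) = d z - 1)
    (hparadj : ∀ z : V, z ≠ v → T.Adj (pp z) z)
    (hadj_d : ∀ {p c : V}, T.Adj p c → d c = d p + 1 ∨ d p = d c + 1)
    (hpar_u : ∀ {z p p' : V}, T.Adj p z → T.Adj p' z → d z = d p + 1 → d z = d p' + 1 → p = p')
    (hpar_eq : ∀ {z p : V}, T.Adj p z → d z = d p + 1 → pp z = p)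
    (hlabxy : ∀ i, lab (px i) = lab (py i)) :
    ∃ k : T ≃g T, (∀ u, lab (k u) = lab u) ∧ k v = v ∧ k x = y := by
  classical
  have hznv : ∀ z : V, d z ≠ 0 → z ≠ v := by
    intro z h hzv'; rw [hzv', hdv] at h; exact h rfl
  have base : Ext T lab v d pp px py 0 :=
    { f := id, g := id, hfv := rfl, hgv := rfl,
      hlab := fun z _ => rfl, hd := fun z _ => rfl,
      hadj := fun z hz hne => absurd (hzv z (by omega)) hne,
      hgd := fun z _ => rfl,
      hgadj := fun z hz hne => absurd (hzv z (by omega)) hne,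
      hgf := fun z _ => rfl, hfg := fun z _ => rfl,
      hpin := fun i hi => by
        have : i = 0 := by omega
        subst this
        show px 0 = py 0
        rw [hpx0, hpy0] }
  let Ch : ∀ n : ℕ, Ext T lab v d pp px py n := fun n =>
    Nat.rec base (fun n E =>
      (step lab hnormal v x y d pp px py hdv hzv hl1 hpxd hpyd hpxadj hpyadj hpx0 hpy0
        hpxtop hpytop hpard hparadj @hadj_d @hpar_u @hpar_eq hlabxy n E).choose) n
  have hstep : ∀ n : ℕ,
      (∀ z, d z ≤ n → (Ch (n+1)).f z = (Ch n).f z) ∧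
      (∀ z, d z ≤ n → (Ch (n+1)).g z = (Ch n).g z) := fun n =>
    (step lab hnormal v x y d pp px py hdv hzv hl1 hpxd hpyd hpxadj hpyadj hpx0 hpy0
        hpxtop hpytop hpard hparadj @hadj_d @hpar_u @hpar_eq hlabxy n (Ch n)).choose_spec
  have hmonof : ∀ m n, n ≤ m → ∀ z, d z ≤ n → (Ch m).f z = (Ch n).f z := by
    intro m
    induction m with
    | zero => intro n hn z hz; have : n = 0 := by omega
              subst this; rfl
    | succ m ih =>
      intro n hn z hz
      rcases Nat.lt_or_ge n (m+1) with h | h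
      · rw [(hstep m).1 z (by omega)]
        exact ih n (by omega) z hz
      · have : n = m + 1 := by omega
        subst this; rfl
  have hmonog : ∀ m n, n ≤ m → ∀ z, d z ≤ n → (Ch m).g z = (Ch n).g z := by
    intro m
    induction m with
    | zero => intro n hn z hz; have : n = 0 := by omega
              subst this; rfl
    | succ m ih =>
      intro n hn z hz
      rcases Nat.lt_or_ge n (m+1) with h | h
      · rw [(hstep m).2 z (by omega)]
        exact ih n (by omega) z hz
      · have : n = m + 1 := by omega
        subst this; rfl
  set F : V → V := fun z => (Ch (d z)).f z with hFdef
  set G : V → V := fun w => (Ch (d w)).g w with hGdef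
  have hFd : ∀ z, d (F z) = d z := fun z => (Ch (d z)).hd z le_rfl
  have hGd : ∀ w, d (G w) = d w := fun w => (Ch (d w)).hgd w le_rfl
  have hGF : ∀ z, G (F z) = z := by
    intro z
    show (Ch (d (F z))).g (F z) = z
    rw [hFd z]
    exact (Ch (d z)).hgf z le_rfl
  have hFG : ∀ w, F (G w) = w := by
    intro w
    show (Ch (d (G w))).f (G w) = w
    rw [hGd w]
    exact (Ch (d w)).hfg w le_rfl
  have hlabF : ∀ z, lab (F z) = lab z := fun z => (Ch (d z)).hlab z le_rfl
  have hFadj : ∀ {z w : V}, T.Adj z w → T.Adj (F z) (F w) := by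
    have key : ∀ {z w : V}, T.Adj z w → d w = d z + 1 → T.Adj (F z) (F w) := by
      intro z w h h1
      have h2 := (Ch (d w)).hadj w le_rfl (hznv w (by omega))
      rw [hpar_eq h h1] at h2
      have h3 : (Ch (d w)).f z = F z := hmonof (d w) (d z) (by omega) z le_rfl
      rw [h3] at h2
      exact h2
    intro z w h
    rcases hadj_d h with h1 | h1
    · exact key h h1
    · exact (key h.symm h1).symm
  have hGadj : ∀ {z w : V}, T.Adj z w → T.Adj (G z) (G w) := by
    have key : ∀ {z w : V}, T.Adj z w → d w = d z + 1 → T.Adj (G z) (G w) := by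
      intro z w h h1
      have h2 := (Ch (d w)).hgadj w le_rfl (hznv w (by omega))
      rw [hpar_eq h h1] at h2
      have h3 : (Ch (d w)).g z = G z := hmonog (d w) (d z) (by omega) z le_rfl
      rw [h3] at h2
      exact h2
    intro z w h
    rcases hadj_d h with h1 | h1
    · exact key h h1
    · exact (key h.symm h1).symm
  refine ⟨⟨⟨F, G, hGF, hFG⟩, ?_⟩, hlabF, ?_, ?_⟩
  · intro z w
    simp only [Equiv.coe_fn_mk]
    constructor
    · intro h
      have := hGadj h
      rwa [hGF, hGF] at this
    · exact hFadj
  · show F v = v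
    exact (Ch (d v)).hfv
  · show F x = y
    have h1 : px (d x) = x := hpxtop _ le_rfl
    have h2 : py (d x) = y := hpytop _ le_rfl
    have := (Ch (d x)).hpin (d x) le_rfl
    rw [h1, h2] at this
    exact this

/-- **Key lemma**: in a tree with a normal labelling, the stabiliser of `v` acts
transitively on vertices whose path from `v` has a given label sequence. -/
lemma main {T : SimpleGraph V} (hT : T.IsTree) (lab : V → C)
    (hnormal : ∀ u w : V, lab u = lab w →
      ∃ φ : T ≃g T, (∀ z, lab (φ z) = lab z) ∧ φ u = w)
    (v x y : V)
    (hL : (tpath hT v x).support.map lab = (tpath hT v y).support.map lab) :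
    ∃ k : T ≃g T, (∀ u, lab (k u) = lab u) ∧ k v = v ∧ k x = y := by
  classical
  have hlen : tdist hT v y = tdist hT v x := by
    have := congrArg List.length hL
    simp only [List.length_map, Walk.length_support] at this
    have h1 : (tpath hT v x).length = tdist hT v x := rfl
    have h2 : (tpath hT v y).length = tdist hT v y := rfl
    omega
  by_cases hx : x = v
  · have h0 : tdist hT v y = 0 := by rw [hlen, hx, tdist_self]
    have hy : y = v := eq_of_tdist_eq_zero hT h0
    exact ⟨⟨Equiv.refl V, Iff.rfl⟩, fun u => rfl, rfl, hx.trans hy.symm⟩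
  · have hl1 : 1 ≤ tdist hT v x := by
      rcases Nat.eq_zero_or_pos (tdist hT v x) with h0 | h1
      · exact absurd (eq_of_tdist_eq_zero hT h0) hx
      · exact h1
    have hbdd : ∀ i, i < tdist hT v x + 1 →
        lab ((tpath hT v x).getVert i) = lab ((tpath hT v y).getVert i) := by
      intro i h
      have hbx : i < (tpath hT v x).support.length := by
        rw [Walk.length_support]; exact h
      have hby : i < (tpath hT v y).support.length := by
        rw [Walk.length_support]
        have h2 : (tpath hT v y).length = tdist hT v y := rfl
        omega
      have e1 : ((tpath hT v x).support.map lab)[i]'(by simpa using hbx)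
          = lab ((tpath hT v x).getVert i) := by
        rw [List.getElem_map, support_getElem _ _ hbx]
      have e2 : ((tpath hT v y).support.map lab)[i]'(by simpa using hby)
          = lab ((tpath hT v y).getVert i) := by
        rw [List.getElem_map, support_getElem _ _ hby]
      rw [← e1, ← e2]
      exact List.getElem_of_eq hL _
    have hxy : lab x = lab y := by
      have h := hbdd (tdist hT v x) (by omega)
      rw [show tdist hT v x = (tpath hT v x).length from rfl] at h
      rw [(tpath hT v x).getVert_length] at h
      rw [(tpath hT v y).getVert_of_length_le
        (by have h2 : (tpath hT v y).length = tdist hT v y := rfl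
            have h3 : (tpath hT v x).length = tdist hT v x := rfl
            omega)] at h
      exact h
    have hlabxy : ∀ i, lab ((tpath hT v x).getVert i) = lab ((tpath hT v y).getVert i) := by
      intro i
      rcases Nat.lt_or_ge i (tdist hT v x + 1) with h | h
      · exact hbdd i h
      · rw [(tpath hT v x).getVert_of_length_le (by show tdist hT v x ≤ i; omega),
          (tpath hT v y).getVert_of_length_le (by show tdist hT v y ≤ i; omega)]
        exact hxy
    exact buildIso lab hnormal v x y (tdist hT v) (tpar hT v)
      ((tpath hT v x).getVert) ((tpath hT v y).getVert)
      (tdist_self hT v)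
      (fun z h => eq_of_tdist_eq_zero hT h)
      hl1
      (fun i => getVert_tdist hT _ (tpath_isPath hT v x) i)
      (fun i => by
        have := getVert_tdist hT _ (tpath_isPath hT v y) i
        rwa [show (tpath hT v y).length = tdist hT v y from rfl, hlen] at this)
      (fun i h => (tpath hT v x).adj_getVert_succ h)
      (fun i h => (tpath hT v y).adj_getVert_succ
        (by show i < (tpath hT v y).length
            have h2 : (tpath hT v y).length = tdist hT v y := rfl
            omega))
      ((tpath hT v x).getVert_zero) ((tpath hT v y).getVert_zero)
      (fun i h => (tpath hT v x).getVert_of_length_le h)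
      (fun i h => (tpath hT v y).getVert_of_length_le
        (by show (tpath hT v y).length ≤ i
            have h2 : (tpath hT v y).length = tdist hT v y := rfl
            omega))
      (fun z h => tpar_tdist hT h)
      (fun z h => tpar_adj hT h)
      (fun h => adj_tdist hT h)
      (fun h h' h1 h2 => parent_unique hT h h' h1 h2)
      (fun h h1 => tpar_eq hT h h1)
      hlabxy

end Stmt3Aux


open Stmt3Aux in
/-- Cartan-type decomposition: the label-preserving automorphism group of a
label-regular tree with normal labelling is the disjoint union, over compatible label
sequences `α` beginning and ending with `lab v`, of the double cosets `K g_α K` where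
`K = Stab(v)`; i.e. every label-preserving automorphism lies in exactly one such coset. -/
theorem stmt_3 {V C : Type*} (T : SimpleGraph V) (hT : T.IsTree)
    (hlf : ∀ u : V, (T.neighborSet u).Finite) (lab : V → C)
    (hnormal : ∀ u w : V, lab u = lab w →
      ∃ φ : T ≃g T, (∀ x, lab (φ x) = lab x) ∧ φ u = w)
    (v : V) (gα : List C → T ≃g T)
    (hgα_lab : ∀ α, ∀ u, lab (gα α u) = lab u)
    (hgα : ∀ α : List C,
      (∃ (u w : V) (p : T.Walk u w), p.IsPath ∧ p.support.map lab = α) →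
      α.head? = some (lab v) → α.getLast? = some (lab v) →
      ∀ p : T.Walk v (gα α v), p.IsPath → p.support.map lab = α)
    (g : T ≃g T) (hg : ∀ u, lab (g u) = lab u) :
    ∃! α : List C,
      ((∃ (u w : V) (p : T.Walk u w), p.IsPath ∧ p.support.map lab = α) ∧
        α.head? = some (lab v) ∧ α.getLast? = some (lab v)) ∧
      ∃ k₁ k₂ : T ≃g T, (∀ u, lab (k₁ u) = lab u) ∧ (∀ u, lab (k₂ u) = lab u) ∧
        k₁ v = v ∧ k₂ v = v ∧ ∀ x, g x = k₁ (gα α (k₂ x)) := by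
  classical
  have hhead : ∀ (a b : V) (p : T.Walk a b), (p.support.map lab).head? = some (lab a) := by
    intro a b p
    rw [p.support_eq_cons]
    rfl
  have hlastgen : ∀ (a b : V) (p : T.Walk a b),
      (p.support.map lab).getLast? = some (lab b) := by
    intro a b p
    rw [List.getLast?_map, List.getLast?_eq_getLast_of_ne_nil (p.support_ne_nil),
      Walk.getLast_support]
    rfl
  -- the canonical label sequence of g
  set α : List C := (tpath hT v (g v)).support.map lab with hαdef
  have hcompat : ∃ (u w : V) (p : T.Walk u w), p.IsPath ∧ p.support.map lab = α :=
    ⟨v, g v, tpath hT v (g v), tpath_isPath hT v (g v), rfl⟩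
  have hαhead : α.head? = some (lab v) := hhead v (g v) _
  have hαlast : α.getLast? = some (lab v) := by
    rw [hαdef, hlastgen v (g v) _, hg v]
  -- the label sequence of any label-preserving automorphism h, mapped through
  -- a label-preserving automorphism fixing v, is preserved
  have key : ∀ (k₁ : T ≃g T), (∀ u, lab (k₁ u) = lab u) → k₁ v = v → ∀ b : V,
      (tpath hT v (k₁ b)).support.map lab = (tpath hT v b).support.map lab := by
    intro k₁ hk₁lab hk₁v b
    have hinj : Function.Injective ⇑k₁.toHom := fun a b h => k₁.injective h
    have hq : ((tpath hT v b).map k₁.toHom).IsPath :=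
      Walk.map_isPath_of_injective hinj (tpath_isPath hT v b)
    have hq' : (((tpath hT v b).map k₁.toHom).copy hk₁v rfl).IsPath := by
      rwa [Walk.isPath_copy]
    have he : ((tpath hT v b).map k₁.toHom).copy hk₁v rfl = tpath hT v (k₁ b) :=
      tpath_unique hT _ hq'
    rw [← he, Walk.support_copy, Walk.support_map, List.map_map]
    exact List.map_congr_left (fun a _ => hk₁lab a)
  refine ⟨α, ⟨⟨hcompat, hαhead, hαlast⟩, ?_⟩, ?_⟩
  · -- existence of the double coset decomposition
    have hEq : (tpath hT v (gα α v)).support.map lab = α :=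
      hgα α hcompat hαhead hαlast _ (tpath_isPath hT v (gα α v))
    obtain ⟨k, hklab, hkv, hkx⟩ :=
      main hT lab hnormal v (gα α v) (g v) (by rw [hEq])
    have hsymm_lab : ∀ w : V, lab ((gα α).symm w) = lab w := by
      intro w
      have := hgα_lab α ((gα α).symm w)
      rw [RelIso.apply_symm_apply] at this
      exact this.symm
    have hksymm_lab : ∀ w : V, lab (k.symm w) = lab w := by
      intro w
      have := hklab (k.symm w)
      rw [RelIso.apply_symm_apply] at this
      exact this.symm
    refine ⟨k, (g.trans k.symm).trans (gα α).symm, hklab, ?_, hkv, ?_, ?_⟩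
    · intro u
      show lab ((gα α).symm (k.symm (g u))) = lab u
      rw [hsymm_lab, hksymm_lab, hg]
    · show (gα α).symm (k.symm (g v)) = v
      have h1 : k.symm (g v) = gα α v := by
        rw [← hkx]; exact k.symm_apply_apply _
      rw [h1]
      exact (gα α).symm_apply_apply v
    · intro z
      show g z = k (gα α ((gα α).symm (k.symm (g z))))
      rw [RelIso.apply_symm_apply, RelIso.apply_symm_apply]
  · -- uniqueness
    rintro β ⟨⟨compatβ, hh, hl⟩, k₁, k₂, hk₁lab, hk₂lab, hk₁v, hk₂v, heq⟩
    have hβ : (tpath hT v (gα β v)).support.map lab = β :=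
      hgα β compatβ hh hl _ (tpath_isPath hT v (gα β v))
    have hgv : k₁ (gα β v) = g v := by
      have := heq v
      rw [hk₂v] at this
      exact this.symm
    calc β = (tpath hT v (gα β v)).support.map lab := hβ.symm
      _ = (tpath hT v (k₁ (gα β v))).support.map lab := (key k₁ hk₁lab hk₁v _).symm
      _ = α := by rw [hgv]
end

section
/- Let G be a topological group whose underlying abstract group is simple, H a Hausdorff topological group, and φ: G → H a continuous homomorphism. If there exists a sequence (g_i) in G such that φ(g_i) converges in H and the contraction subgroup con(g_i) = { x : g_i x g_i⁻¹ → id } is non-trivial, then φ is the trivial homomorphism. -/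
/-- Let `G` be a topological group that is simple as an abstract group, `H`
a Hausdorff topological group and `φ : G → H` a continuous homomorphism. If some sequence
`(gᵢ)` in `G` has `(φ (gᵢ))` convergent and non-trivial contraction subgroup
`con(gᵢ) = { x | gᵢ x gᵢ⁻¹ → 1 }`, then `φ` is trivial. -/
theorem stmt_9 {G H : Type*} [Group G] [TopologicalSpace G] [IsTopologicalGroup G]
    [IsSimpleGroup G]
    [Group H] [TopologicalSpace H] [IsTopologicalGroup H] [T2Space H]
    (φ : G →* H) (hφ : Continuous φ)
    (hseq : ∃ g : ℕ → G,
      (∃ h₀ : H, Filter.Tendsto (fun i => φ (g i)) Filter.atTop (nhds h₀)) ∧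
      ∃ x : G, x ≠ 1 ∧
        Filter.Tendsto (fun i => g i * x * (g i)⁻¹) Filter.atTop (nhds 1)) :
    ∀ y : G, φ y = 1 := by
  obtain ⟨g, ⟨h₀, hg⟩, x, hx, hcon⟩ := hseq
  have h1 : Filter.Tendsto (fun i => φ (g i) * φ x * (φ (g i))⁻¹)
      Filter.atTop (nhds (h₀ * φ x * h₀⁻¹)) :=
    ((hg.mul tendsto_const_nhds).mul hg.inv)
  have h2 : Filter.Tendsto (fun i => φ (g i) * φ x * (φ (g i))⁻¹)
      Filter.atTop (nhds 1) := by
    have h := (hφ.tendsto 1).comp hcon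
    have : (fun i => φ (g i) * φ x * (φ (g i))⁻¹)
        = (⇑φ ∘ fun i => g i * x * (g i)⁻¹) := by
      funext i; simp [Function.comp, map_mul, map_inv]
    rw [this]; simpa using h
  have key : h₀ * φ x * h₀⁻¹ = 1 := tendsto_nhds_unique h1 h2
  have hxker : φ x = 1 := by
    have := congrArg (fun z => h₀⁻¹ * z * h₀) key
    simpa [mul_assoc] using this
  have : φ.ker = ⊤ := by
    rcases (φ.normal_ker.eq_bot_or_eq_top) with h | h
    · exfalso
      have hxm : x ∈ φ.ker := MonoidHom.mem_ker.mpr hxker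
      rw [h] at hxm
      exact hx (Subgroup.mem_bot.mp hxm)
    · exact h
  intro y
  have : y ∈ φ.ker := this ▸ Subgroup.mem_top y
  exact this
end

section
/- Let T be a tree, {v, w} an edge of T, and let T_v and T_w be the two components of T minus the edge {v,w}, containing v and w respectively. Let (g_i) be a sequence of automorphisms of T such that g_i⁻¹(v) ∈ T_v and d(g_i⁻¹(v), v) ≥ i for all i. If x is an automorphism of T fixing every vertex of T_v, then for each i, the automorphism g_i x g_i⁻¹ fixes every vertex at distance at most i from v; hence g_i x g_i⁻¹ → id in the topology of pointwise convergence, i.e., x ∈ con(g_i). -/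
open SimpleGraph

section helpers
variable {V : Type*} {T : SimpleGraph V}

lemma iso_dist_le (f : T ≃g T) (hc : T.Connected) (a b : V) :
    T.dist (f a) (f b) ≤ T.dist a b := by
  obtain ⟨p, hp⟩ := hc.exists_walk_length_eq_dist a b
  calc T.dist (f a) (f b) ≤ (p.map f.toHom).length := SimpleGraph.dist_le _
    _ = T.dist a b := by rw [SimpleGraph.Walk.length_map, hp]

lemma iso_dist (f : T ≃g T) (hc : T.Connected) (a b : V) :
    T.dist (f a) (f b) = T.dist a b := by
  refine le_antisymm (iso_dist_le f hc a b) ?_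
  have := iso_dist_le f.symm hc (f a) (f b)
  simpa using this

lemma dist_le_of_mem_support {z a u : V} (p : T.Walk z a) (hu : u ∈ p.support)
    (hlen : p.length = T.dist z a) : T.dist z u + T.dist u a ≤ T.dist z a := by
  classical
  have hspec := p.take_spec hu
  have hsum : (p.takeUntil u hu).length + (p.dropUntil u hu).length = p.length := by
    rw [← SimpleGraph.Walk.length_append, hspec]
  calc T.dist z u + T.dist u a ≤ (p.takeUntil u hu).length + (p.dropUntil u hu).length :=
        Nat.add_le_add (SimpleGraph.dist_le _) (SimpleGraph.dist_le _)
    _ = T.dist z a := by rw [hsum, hlen]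

lemma dist_pos_of_ne (hc : T.Connected) {a b : V} (h : a ≠ b) : 1 ≤ T.dist a b := by
  have : T.dist a b ≠ 0 := by
    rw [SimpleGraph.dist_ne_zero_iff_ne_and_reachable]
    exact ⟨h, hc.preconnected a b⟩
  omega

/-- No tie: in a tree with edge v~w, no vertex is equidistant to v and w. -/
lemma no_tie (hT : T.IsTree) {v w : V} (hvw : T.Adj v w) (z : V) :
    T.dist z v ≠ T.dist z w := by
  intro h
  have hc := hT.isConnected
  obtain ⟨P, hP, hPl⟩ := hc.exists_path_of_dist v z
  obtain ⟨Q, hQ, hQl⟩ := hc.exists_path_of_dist w z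
  have hvz : T.dist v z = T.dist z v := SimpleGraph.dist_comm
  have hwz : T.dist w z = T.dist z w := SimpleGraph.dist_comm
  have hvQ : v ∉ Q.support := by
    intro hmem
    have h2 := dist_le_of_mem_support Q hmem (by rw [hQl])
    have h1 : 1 ≤ T.dist w v := dist_pos_of_ne hc hvw.symm.ne
    omega
  have hcons : (SimpleGraph.Walk.cons hvw Q).IsPath := hQ.cons hvQ
  have heq : SimpleGraph.Walk.cons hvw Q = P := (hT.existsUnique_path v z).unique hcons hP
  have hlen : (SimpleGraph.Walk.cons hvw Q).length = P.length := by rw [heq]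
  rw [SimpleGraph.Walk.length_cons, hQl, hPl] at hlen
  omega

/-- Edge cut: an edge from the v-side to the w-side must start at v. -/
lemma edge_cut (hT : T.IsTree) {v w : V} (hvw : T.Adj v w) {z z' : V}
    (h : T.Adj z z') (hz : T.dist z v < T.dist z w) (hz' : T.dist z' w < T.dist z' v) :
    z = v := by
  have hc := hT.isConnected
  have hdvw : T.dist v w = 1 := SimpleGraph.dist_eq_one_iff_adj.mpr hvw
  have hdzz' : T.dist z z' = 1 := SimpleGraph.dist_eq_one_iff_adj.mpr h
  have htri1 : T.dist z w ≤ T.dist z v + 1 := by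
    have := hc.dist_triangle (u := z) (v := v) (w := w); omega
  have hwvc : T.dist w v = T.dist v w := SimpleGraph.dist_comm
  have htri2 : T.dist z' v ≤ T.dist z' w + 1 := by
    have := hc.dist_triangle (u := z') (v := w) (w := v); omega
  have hzzc : T.dist z' z = T.dist z z' := SimpleGraph.dist_comm
  have htri3 : T.dist z' w ≤ T.dist z w + 1 := by
    have := hc.dist_triangle (u := z') (v := z) (w := w); omega
  have htri4 : T.dist z w ≤ T.dist z' w + 1 := by
    have := hc.dist_triangle (u := z) (v := z') (w := w); omega
  have htri5 : T.dist z' v ≤ T.dist z v + 1 := by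
    have := hc.dist_triangle (u := z') (v := z) (w := v); omega
  have hzw : T.dist z w = T.dist z v + 1 := by omega
  have hz'w : T.dist z' w = T.dist z v := by omega
  have hz'v : T.dist z' v = T.dist z v + 1 := by omega
  obtain ⟨P, hP, hPl⟩ := hc.exists_path_of_dist v z
  obtain ⟨Q, hQ, hQl⟩ := hc.exists_path_of_dist z' w
  have hvz : T.dist v z = T.dist z v := SimpleGraph.dist_comm
  have hwP : w ∉ P.support := by
    intro hmem
    have h2 := dist_le_of_mem_support P hmem (by rw [hPl])
    have h1 : 1 ≤ T.dist v w := by omega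
    have h3 : T.dist w z = T.dist z w := SimpleGraph.dist_comm
    omega
  have hA0 : (SimpleGraph.Walk.cons hvw.symm P).IsPath := hP.cons hwP
  have hApath : (SimpleGraph.Walk.cons hvw.symm P).reverse.IsPath := hA0.reverse
  have hzQ : z ∉ Q.support := by
    intro hmem
    have h2 := dist_le_of_mem_support Q hmem (by rw [hQl])
    have h3 : 1 ≤ T.dist z' z := by omega
    omega
  have hBpath : (SimpleGraph.Walk.cons h Q).IsPath := hQ.cons hzQ
  have heq : (SimpleGraph.Walk.cons hvw.symm P).reverse = SimpleGraph.Walk.cons h Q :=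
    (hT.existsUnique_path z w).unique hApath hBpath
  have hvA : v ∈ (SimpleGraph.Walk.cons hvw.symm P).reverse.support := by
    rw [SimpleGraph.Walk.support_reverse, List.mem_reverse, SimpleGraph.Walk.support_cons]
    exact List.mem_cons_of_mem _ P.start_mem_support
  rw [heq, SimpleGraph.Walk.support_cons] at hvA
  rcases List.mem_cons.mp hvA with hvA | hvA
  · exact hvA.symm
  · exfalso
    have h2 := dist_le_of_mem_support Q hvA (by rw [hQl])
    omega

/-- Any walk from the v-side to the w-side passes through v. -/
lemma walk_through_v (hT : T.IsTree) {v w : V} (hvw : T.Adj v w) :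
    ∀ {p a : V} (W : T.Walk p a), T.dist p v < T.dist p w → T.dist a w < T.dist a v →
      v ∈ W.support := by
  intro p a W
  induction W with
  | nil => intro h1 h2; omega
  | cons hadj q ih =>
    intro h1 h2
    rename_i p' b a'
    rcases lt_trichotomy (T.dist b v) (T.dist b w) with hb | hb | hb
    · rw [SimpleGraph.Walk.support_cons]
      exact List.mem_cons_of_mem _ (ih hb h2)
    · exact absurd hb (no_tie hT hvw b)
    · have hpv : p' = v := edge_cut hT hvw hadj h1 hb
      rw [SimpleGraph.Walk.support_cons, hpv]
      exact List.mem_cons_self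

lemma dist_ge_side (hT : T.IsTree) {v w : V} (hvw : T.Adj v w) {p a : V}
    (hp : T.dist p v < T.dist p w) (ha : T.dist a w < T.dist a v) :
    T.dist p v + 1 ≤ T.dist p a := by
  have hc := hT.isConnected
  obtain ⟨W, hW, hWl⟩ := hc.exists_path_of_dist p a
  have hv : v ∈ W.support := walk_through_v hT hvw W hp ha
  have hle := dist_le_of_mem_support W hv (by rw [hWl])
  have hva : 1 ≤ T.dist v a := by
    refine dist_pos_of_ne hc fun hh => ?_
    subst hh
    simp [SimpleGraph.dist_self] at ha
  omega

end helpers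

/-- Let `{v,w}` be an edge of a tree `T`, with half-trees `T_v` and `T_w`
(a vertex `u` lies in `T_v` iff `d(u,v) < d(u,w)`). If `gᵢ⁻¹ v ∈ T_v` with
`d(gᵢ⁻¹ v, v) ≥ i`, and `x` fixes `T_v` pointwise, then `gᵢ x gᵢ⁻¹` fixes the ball of
radius `i` about `v`; hence `gᵢ x gᵢ⁻¹ → id` pointwise, i.e. `x ∈ con(gᵢ)`. -/
theorem stmt_12 {V : Type*} (T : SimpleGraph V) (hT : T.IsTree)
    (v w : V) (hvw : T.Adj v w) (g : ℕ → T ≃g T)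
    (hgv : ∀ i : ℕ, T.dist ((g i).symm v) v < T.dist ((g i).symm v) w ∧
      i ≤ T.dist ((g i).symm v) v)
    (x : T ≃g T) (hx : ∀ u : V, T.dist u v < T.dist u w → x u = u) :
    (∀ i : ℕ, ∀ u : V, T.dist u v ≤ i → (g i) (x ((g i).symm u)) = u) ∧
      ∀ u : V, ∀ᶠ i in Filter.atTop, (g i) (x ((g i).symm u)) = u := by
  have hc := hT.isConnected
  have main : ∀ i : ℕ, ∀ u : V, T.dist u v ≤ i → (g i) (x ((g i).symm u)) = u := by
    intro i u hu
    have hpa : T.dist ((g i).symm v) ((g i).symm u) = T.dist u v := by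
      rw [SimpleGraph.dist_comm]
      exact iso_dist (g i).symm hc u v
    have ha : T.dist ((g i).symm u) v < T.dist ((g i).symm u) w := by
      rcases lt_trichotomy (T.dist ((g i).symm u) v) (T.dist ((g i).symm u) w) with h | h | h
      · exact h
      · exact absurd h (no_tie hT hvw _)
      · exfalso
        have hge := dist_ge_side hT hvw (hgv i).1 h
        have h2 := (hgv i).2
        omega
    rw [hx _ ha]
    exact (g i).apply_symm_apply u
  refine ⟨main, fun u => ?_⟩
  rw [Filter.eventually_atTop]
  exact ⟨T.dist u v, fun i hi => main i u hi⟩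
end
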